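/- arXiv:1511.03542 — 2 statements merged into one kernel-verified Lean document; each statement's English description precedes it below -/
import Mathlib

section
/- In type \(C_n\), the set \(\Gamma_{\gamma_i} = \{t_{\ell,m} \mid \ell \in \{i,i+1\},\ m \ge i+1\}\) is a Heisenberg set of centre \(\gamma_i = t_{i,i+1} = \beta_i - \alpha_i\); that is, \(\gamma_i \in \Gamma_{\gamma_i}\) and every \(\alpha \in \Gamma_{\gamma_i} \setminus \{\gamma_i\}\) has a unique \(\alpha' \in \Gamma_{\gamma_i}\) with \(\alpha + \alpha' = \gamma_i\). -/
/-- The standard basis vector `eᵢ` of `ℝ^∞` (1-based indexing). -/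
noncomputable def e (i : ℕ) : ℕ → ℝ := fun m => if m = i then 1 else 0

/-- The simple roots of type `Cₙ`: `αᵢ = eᵢ - eᵢ₊₁` for `i < n` and `αₙ = 2eₙ`. -/
noncomputable def alC (n i : ℕ) : ℕ → ℝ := if i = n then (2 : ℝ) • e n else e i - e (i + 1)

/-- The entry `t_{i,j}` of the shifted tableau `T(Cₙ)`. -/
noncomputable def tC (n i j : ℕ) : ℕ → ℝ :=
  if j ≤ n - 1 then
    (∑ m ∈ Finset.Ico i j, alC n m) + (2 : ℝ) • (∑ m ∈ Finset.Ico j n, alC n m) + alC n n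
  else
    ∑ m ∈ Finset.Icc i (2 * n - j), alC n m

/-- The root system of type `Cₙ`: `±eᵢ ± eⱼ` and `±2eᵢ`. -/
def DeltaC (n : ℕ) : Set (ℕ → ℝ) :=
  {v | ∃ i j, 1 ≤ i ∧ i ≤ n ∧ 1 ≤ j ∧ j ≤ n ∧
    ((i ≠ j ∧ v = e i - e j) ∨ v = e i + e j ∨ v = -e i - e j)}

/-- A subset `Γ` of a root system `Δ` is a Heisenberg set of centre `γ`. -/
def IsHeisenbergSet {V : Type*} [AddCommGroup V] (Δ Γ : Set V) (γ : V) : Prop :=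
  Γ ⊆ Δ ∧ γ ∈ Γ ∧ ∀ α ∈ Γ, α ≠ γ → ∃! α', α' ∈ Γ ∧ α + α' = γ

/-- The set `Γ_{γᵢ} = {t_{ℓ,m} ∣ ℓ ∈ {i, i+1}, m ≥ i+1}`. -/
def GammaC (n i : ℕ) : Set (ℕ → ℝ) :=
  {v | ∃ ℓ m, (ℓ = i ∨ ℓ = i + 1) ∧ ℓ ≤ m ∧ i + 1 ≤ m ∧ m ≤ 2 * n - ℓ ∧ v = tC n ℓ m}

/-!
In the coordinates `eᵢ`, the tableau entries are `t_{ℓ,m} = e_ℓ + e_m` for `m ≤ n` and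
`t_{ℓ,m} = e_ℓ - e_{2n+1-m}` for `m > n`, and the centre is `γᵢ = eᵢ + eᵢ₊₁`.
Hence `t_{i,m}` and `t_{i+1,2n+1-m}` always add up to `γᵢ`: the reflection `m ↦ 2n+1-m`
pairs row `i` (minus the centre) with row `i+1`. Uniqueness of partners is automatic in a group.
-/

theorem isHeisenbergSet_iff {V : Type*} [AddCommGroup V] {Δ Γ : Set V} {γ : V} :
    IsHeisenbergSet Δ Γ γ ↔ Γ ⊆ Δ ∧ γ ∈ Γ ∧ ∀ α ∈ Γ, α ≠ γ → γ - α ∈ Γ := by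
  refine and_congr_right fun _ => and_congr_right fun _ => forall₂_congr fun α _ => ?_
  refine imp_congr_right fun _ => ⟨fun ⟨α', ⟨hα', hsum⟩, _⟩ => ?_, fun h => ⟨γ - α, ⟨h, ?_⟩, ?_⟩⟩
  · rwa [← hsum, add_sub_cancel_left]
  · exact add_sub_cancel α γ
  · rintro α' ⟨-, rfl⟩
    exact (add_sub_cancel_left α α').symm

theorem sum_Ico_alC {n i j : ℕ} (hij : i ≤ j) (hjn : j ≤ n) :
    ∑ m ∈ Finset.Ico i j, alC n m = e i - e j := by
  induction j, hij using Nat.le_induction with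
  | base => simp
  | succ j hij ih =>
    rw [Finset.sum_Ico_succ_top hij, ih (by omega), alC, if_neg (by omega)]
    abel

theorem tC_eq_add {n i j : ℕ} (hij : i ≤ j) (hjn : j ≤ n) : tC n i j = e i + e j := by
  rw [tC]
  split_ifs with h
  · rw [sum_Ico_alC hij hjn, sum_Ico_alC hjn le_rfl, alC, if_pos rfl, smul_sub]
    module
  · obtain rfl : j = n := by omega
    rw [show 2 * j - j = j by omega, ← Finset.Ico_add_one_right_eq_Icc,
      Finset.sum_Ico_succ_top hij, sum_Ico_alC hij le_rfl, alC, if_pos rfl]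
    module

theorem tC_eq_sub {n i j : ℕ} (hnj : n < j) (hj : j ≤ 2 * n - i) :
    tC n i j = e i - e (2 * n + 1 - j) := by
  rw [tC, if_neg (by omega), ← Finset.Ico_add_one_right_eq_Icc,
    sum_Ico_alC (by omega) (by omega), show 2 * n - j + 1 = 2 * n + 1 - j by omega]

theorem tC_mem_DeltaC {n i j : ℕ} (hi : 1 ≤ i) (hij : i ≤ j) (hj : j ≤ 2 * n - i) :
    tC n i j ∈ DeltaC n := by
  rcases le_or_gt j n with hjn | hnj
  · exact ⟨i, j, hi, by omega, by omega, hjn, .inr (.inl (tC_eq_add hij hjn))⟩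
  · exact ⟨i, 2 * n + 1 - j, hi, by omega, by omega, by omega,
      .inl ⟨by omega, tC_eq_sub hnj hj⟩⟩

theorem tC_add_tC_reflect {n i m : ℕ} (hm : i + 2 ≤ m) (hm' : m ≤ 2 * n - i) :
    tC n i m + tC n (i + 1) (2 * n + 1 - m) = e i + e (i + 1) := by
  rcases le_or_gt m n with hmn | hnm
  · rw [tC_eq_add (by omega) hmn, tC_eq_sub (by omega) (by omega),
      show 2 * n + 1 - (2 * n + 1 - m) = m by omega]
    abel
  · rw [tC_eq_sub hnm hm', tC_eq_add (by omega) (by omega)]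
    abel

theorem GammaC_isHeisenbergSet_general (n i : ℕ) (hi : 1 ≤ i) (hin : i ≤ n - 1) :
    tC n i (i + 1) = tC n i i - alC n i ∧
    IsHeisenbergSet (DeltaC n) (GammaC n i) (tC n i (i + 1)) := by
  have hγ : tC n i (i + 1) = e i + e (i + 1) := tC_eq_add (by omega) (by omega)
  refine ⟨?_, isHeisenbergSet_iff.2
    ⟨?_, ⟨i, i + 1, .inl rfl, by omega, le_rfl, by omega, rfl⟩, ?_⟩⟩
  · rw [hγ, tC_eq_add le_rfl (by omega), alC, if_neg (by omega)]
    abel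
  · rintro _ ⟨ℓ, m, hℓ, hℓm, -, hm, rfl⟩
    exact tC_mem_DeltaC (by omega) hℓm hm
  · rintro _ ⟨ℓ, m, hℓ | hℓ, hℓm, him, hm, rfl⟩ hne <;> subst ℓ
    · have hm_ne : m ≠ i + 1 := by
        rintro rfl
        exact hne rfl
      refine ⟨i + 1, 2 * n + 1 - m, .inr rfl, by omega, by omega, by omega, ?_⟩
      rw [hγ, ← tC_add_tC_reflect (by omega) hm, add_sub_cancel_left]
    · refine ⟨i, 2 * n + 1 - m, .inl rfl, by omega, by omega, by omega, ?_⟩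
      rw [hγ, ← tC_add_tC_reflect (n := n) (m := 2 * n + 1 - m) (by omega) (by omega),
        show 2 * n + 1 - (2 * n + 1 - m) = m by omega, add_sub_cancel_right]

/-- In type `Cₙ`, the set `Γ_{γᵢ} = {t_{ℓ,m} ∣ ℓ ∈ {i,i+1}, m ≥ i+1}` is a Heisenberg set
of centre `γᵢ = t_{i,i+1} = βᵢ - αᵢ`. -/
theorem GammaC_isHeisenbergSet (n i : ℕ) (hn : 3 ≤ n) (hi : 1 ≤ i) (hin : i ≤ n - 1) :
    tC n i (i + 1) = tC n i i - alC n i ∧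
    IsHeisenbergSet (DeltaC n) (GammaC n i) (tC n i (i + 1)) :=
  GammaC_isHeisenbergSet_general n i hi hin
end

section
/- In a simple root system \(\Delta\), the roots of the Kostant cascade \(\{\beta_K\}_{K \in \mathcal{K}}\) are pairwise strongly orthogonal: for distinct \(K, L\), neither \(\beta_K + \beta_L\) nor \(\beta_K - \beta_L\) is a root. -/
/-!
Cascade roots of different components of a subsystem are orthogonal, and `β + γ ∉ Δ` since
otherwise `β + γ` would connect them; for orthogonal roots `β - γ ∈ Δ` would give
`β + γ = s_γ (β - γ) ∈ Δ`. Within one component everything rests on the uniqueness of its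
highest root `θ`: a cascade root `γ` below it is orthogonal to `θ` with `θ + γ ∉ Δ` by
maximality, and the induction descends into the subsystem orthogonal to `θ`.

Uniqueness: a highest root pairs nonnegatively with the positive roots of its component. Two
highest roots `θ ≠ θ'` of one component are orthogonal (else `θ - θ'` and `θ' - θ` would both be
positive) and, since connected roots of a closed subsystem are at distance at most two, are
joined through a positive root `x` with `⟪θ, x⟫, ⟪θ', x⟫ > 0`. Then `θ' - x` is a positive root
of the component with `⟪θ, θ' - x⟫ < 0`.
-/

/-- Two elements of a subsystem `S` are *connected* (lie in the same irreducible
component) if they are joined by a chain of non-orthogonal roots of `S`. -/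
def RootConnected {V : Type*} (ip : V → V → ℝ) (S : Set V) (a b : V) : Prop :=
  a ∈ S ∧ b ∈ S ∧ Relation.ReflTransGen (fun x y => x ∈ S ∧ y ∈ S ∧ ip x y ≠ 0) a b

/-- `β` is the highest root of one of the irreducible components of the subsystem `S`
(relative to the positive system `P`): it is positive, and adding any positive root of its
component never yields a root of `S`. -/
def IsHighestRootOfComponent {V : Type*} [AddCommGroup V] (ip : V → V → ℝ)
    (P S : Set V) (β : V) : Prop :=
  β ∈ S ∧ β ∈ P ∧ ∀ α ∈ S, α ∈ P → RootConnected ip S α β → β + α ∉ S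

/-- The Kostant cascade, defined recursively: the highest roots of the irreducible
components of `S` belong to the cascade of `S`, and so do the cascade roots of the
subsystem of each component orthogonal to its highest root. -/
inductive InCascade {V : Type*} [AddCommGroup V] (ip : V → V → ℝ) (P : Set V) :
    Set V → V → Prop where
  | highest (S : Set V) (β : V) : IsHighestRootOfComponent ip P S β → InCascade ip P S β
  | step (S : Set V) (β' β : V) : IsHighestRootOfComponent ip P S β' →
      InCascade ip P {α | α ∈ S ∧ RootConnected ip S α β' ∧ ip α β' = 0} β →
      InCascade ip P S β

open scoped RealInnerProductSpace

def StronglyOrthogonal {G : Type*} [AddGroup G] (Δ : Set G) (β γ : G) : Prop :=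
  β + γ ∉ Δ ∧ β - γ ∉ Δ

theorem StronglyOrthogonal.symm {G : Type*} [AddCommGroup G] {Δ : Set G} {β γ : G}
    (hneg : ∀ α ∈ Δ, -α ∈ Δ) (h : StronglyOrthogonal Δ β γ) : StronglyOrthogonal Δ γ β :=
  ⟨fun hadd => h.1 (by rwa [add_comm]), fun hsub => h.2 (by simpa using hneg _ hsub)⟩

structure IsClosedSubsystem {G : Type*} [AddGroup G] (Δ S : Set G) : Prop where
  subset : S ⊆ Δ
  neg_mem : ∀ α ∈ S, -α ∈ S
  add_mem : ∀ α ∈ S, ∀ β ∈ S, α + β ∈ Δ → α + β ∈ S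

theorem IsClosedSubsystem.sub_mem {G : Type*} [AddGroup G] {Δ S : Set G} {α β : G}
    (hS : IsClosedSubsystem Δ S) (hα : α ∈ S) (hβ : β ∈ S) (h : α - β ∈ Δ) : α - β ∈ S := by
  rw [sub_eq_add_neg] at h ⊢
  exact hS.add_mem α hα (-β) (hS.neg_mem β hβ) h

theorem RootConnected.trans {W : Type*} {ip : W → W → ℝ} {S : Set W} {a b c : W}
    (h : RootConnected ip S a b) (h' : RootConnected ip S b c) : RootConnected ip S a c :=
  ⟨h.1, h'.2.1, h.2.2.trans h'.2.2⟩

theorem InCascade.mem_inter {G : Type*} [AddCommGroup G] {ip : G → G → ℝ} {P S : Set G} {γ : G}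
    (h : InCascade ip P S γ) : γ ∈ S ∩ P := by
  induction h with
  | highest _ _ hγ => exact ⟨hγ.1, hγ.2.1⟩
  | step _ _ _ _ _ ih => exact ⟨ih.1.1, ih.2⟩

/-- A crystallographic root system without the finiteness and spanning axioms. -/
structure IsCrystallographicRootSet {V : Type*} [NormedAddCommGroup V] [InnerProductSpace ℝ V]
    (Δ : Set V) : Prop where
  zero_notMem : (0 : V) ∉ Δ
  neg_mem : ∀ α ∈ Δ, -α ∈ Δ
  reflection_mem : ∀ α ∈ Δ, ∀ β ∈ Δ, β - (2 * ⟪β, α⟫ / ⟪α, α⟫) • α ∈ Δ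
  exists_int : ∀ α ∈ Δ, ∀ β ∈ Δ, ∃ m : ℤ, 2 * ⟪β, α⟫ / ⟪α, α⟫ = m

section

variable {V : Type*} [NormedAddCommGroup V] [InnerProductSpace ℝ V]

local notation "ip" => fun x y : V => (inner ℝ x y : ℝ)

namespace IsCrystallographicRootSet

variable {Δ : Set V} (hΔ : IsCrystallographicRootSet Δ) {α β : V}
include hΔ

theorem ne_zero (hα : α ∈ Δ) : α ≠ 0 :=
  ne_of_mem_of_not_mem hα hΔ.zero_notMem

theorem inner_self_pos (hα : α ∈ Δ) : 0 < ⟪α, α⟫ :=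
  real_inner_self_pos.mpr (hΔ.ne_zero hα)

/-- The Cartan number `2⟪α, β⟫ / ⟪β, β⟫` is a positive integer: either it is `1`, and the
reflection of `α` in `β` is `α - β`, or it is at least `2`. -/
theorem sub_mem_or_inner_self_le (hα : α ∈ Δ) (hβ : β ∈ Δ) (h : 0 < ⟪α, β⟫) :
    α - β ∈ Δ ∨ ⟪β, β⟫ ≤ ⟪α, β⟫ := by
  obtain ⟨m, hm⟩ := hΔ.exists_int β hβ α hα
  have hββ := hΔ.inner_self_pos hβ
  have hm_pos : (0 : ℝ) < m := hm ▸ by positivity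
  rcases (show m = 1 ∨ 2 ≤ m by have := Int.cast_pos.mp hm_pos; omega) with rfl | hm2
  · left
    have := hΔ.reflection_mem β hβ α hα
    rwa [hm, Int.cast_one, one_smul] at this
  · right
    have : (2 : ℝ) ≤ 2 * ⟪α, β⟫ / ⟪β, β⟫ := hm ▸ by exact_mod_cast hm2
    rw [le_div_iff₀ hββ] at this
    linarith

theorem eq_or_sub_mem_of_inner_pos (hα : α ∈ Δ) (hβ : β ∈ Δ) (h : 0 < ⟪α, β⟫) :
    α = β ∨ α - β ∈ Δ := by
  rcases hΔ.sub_mem_or_inner_self_le hα hβ h with hαβ | hβα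
  · exact .inr hαβ
  rcases hΔ.sub_mem_or_inner_self_le hβ hα (by rwa [real_inner_comm]) with hβα' | hαβ
  · exact .inr (by simpa using hΔ.neg_mem _ hβα')
  -- both Cartan numbers are at least `2`, which forces `‖α - β‖² ≤ 0`
  left
  rw [← sub_eq_zero, ← inner_self_eq_zero (𝕜 := ℝ)]
  refine le_antisymm ?_ real_inner_self_nonneg
  rw [real_inner_comm α β] at hαβ
  simp only [inner_sub_left, inner_sub_right, real_inner_comm α β]
  linarith

theorem eq_neg_or_add_mem_of_inner_neg (hα : α ∈ Δ) (hβ : β ∈ Δ) (h : ⟪α, β⟫ < 0) :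
    α = -β ∨ α + β ∈ Δ := by
  simpa using hΔ.eq_or_sub_mem_of_inner_pos hα (hΔ.neg_mem β hβ)
    (by rwa [inner_neg_right, neg_pos])

theorem add_mem_of_sub_mem (hβ : β ∈ Δ) (h : ⟪α, β⟫ = 0) (hsub : α - β ∈ Δ) : α + β ∈ Δ := by
  have hββ := (hΔ.inner_self_pos hβ).ne'
  have hcartan : 2 * ⟪α - β, β⟫ / ⟪β, β⟫ = -2 := by
    rw [inner_sub_left, h, zero_sub]
    field_simp
  have := hΔ.reflection_mem β hβ (α - β) hsub
  rw [hcartan] at this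
  convert this using 1
  module

theorem stronglyOrthogonal_of_inner_eq_zero (hβ : β ∈ Δ) (h : ⟪α, β⟫ = 0) (hadd : α + β ∉ Δ) :
    StronglyOrthogonal Δ α β :=
  ⟨hadd, fun hsub => hadd (hΔ.add_mem_of_sub_mem hβ h hsub)⟩

end IsCrystallographicRootSet

section RootConnected

variable {S : Set V} {a b c : V}

theorem RootConnected.of_inner_ne_zero (ha : a ∈ S) (hb : b ∈ S) (h : ⟪a, b⟫ ≠ 0) :
    RootConnected ip S a b :=
  ⟨ha, hb, .single ⟨ha, hb, h⟩⟩

theorem RootConnected.symm (h : RootConnected ip S a b) : RootConnected ip S b a :=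
  have : Std.Symm (fun x y : V => x ∈ S ∧ y ∈ S ∧ ⟪x, y⟫ ≠ 0) :=
    ⟨fun _ _ ⟨hx, hy, hxy⟩ => ⟨hy, hx, by rwa [real_inner_comm]⟩⟩
  ⟨h.2.1, h.1, Std.Symm.symm _ _ h.2.2⟩

theorem RootConnected.head (ha : a ∈ S) (h : ⟪a, b⟫ ≠ 0) (hbc : RootConnected ip S b c) :
    RootConnected ip S a c :=
  (of_inner_ne_zero ha hbc.1 h).trans hbc

theorem RootConnected.neg (hna : -a ∈ S) (ha : a ≠ 0) (h : RootConnected ip S a c) :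
    RootConnected ip S (-a) c :=
  .head hna (by rw [inner_neg_left, neg_ne_zero]; exact inner_self_ne_zero.mpr ha) h

/-- `⟪a + b, a⟫ + ⟪a + b, b⟫ = ‖a + b‖² ≠ 0`, so `a + b` is adjacent to `a` or to `b`. -/
theorem RootConnected.add (hab : a + b ∈ S) (hne : a + b ≠ 0) (ha : RootConnected ip S a c)
    (hb : RootConnected ip S b c) : RootConnected ip S (a + b) c := by
  have hsum : ⟪a + b, a⟫ + ⟪a + b, b⟫ ≠ 0 := by
    rw [← inner_add_right]
    exact inner_self_ne_zero.mpr hne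
  by_cases h : ⟪a + b, a⟫ = 0
  · exact .head hab (by rwa [h, zero_add] at hsum) hb
  · exact .head hab h ha

end RootConnected

def orthogonalInComponent (S : Set V) (b : V) : Set V :=
  {α | α ∈ S ∧ RootConnected ip S α b ∧ ⟪α, b⟫ = 0}

section Subsystem

variable {Δ P S : Set V} (hΔ : IsCrystallographicRootSet Δ) (hS : IsClosedSubsystem Δ S)
include hΔ hS

theorem isClosedSubsystem_orthogonalInComponent (b : V) :
    IsClosedSubsystem Δ (orthogonalInComponent S b) where
  subset _ hα := hS.subset hα.1
  neg_mem α := fun ⟨hα, hαb, hα0⟩ =>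
    ⟨hS.neg_mem α hα, hαb.neg (hS.neg_mem α hα) (hΔ.ne_zero (hS.subset hα)),
      by simpa [inner_neg_left] using hα0⟩
  add_mem α := fun ⟨hα, hαb, hα0⟩ δ ⟨hδ, hδb, hδ0⟩ hsum =>
    have hsumS := hS.add_mem α hα δ hδ hsum
    ⟨hsumS, hαb.add hsumS (hΔ.ne_zero hsum) hδb, by simp_all [inner_add_left]⟩

theorem IsClosedSubsystem.add_mem_or_sub_mem {x b : V} (hx : x ∈ S) (hb : b ∈ S)
    (h : ⟪x, b⟫ ≠ 0) (hne : x ≠ b) (hne' : x ≠ -b) : x + b ∈ S ∨ x - b ∈ S := by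
  have hxΔ := hS.subset hx
  have hbΔ := hS.subset hb
  rcases h.lt_or_gt with hlt | hgt
  · exact .inl (hS.add_mem x hx b hb
      ((hΔ.eq_neg_or_add_mem_of_inner_neg hxΔ hbΔ hlt).resolve_left hne'))
  · exact .inr (hS.sub_mem hx hb
      ((hΔ.eq_or_sub_mem_of_inner_pos hxΔ hbΔ hgt).resolve_left hne))

/-- A path `a — x — b — c` with `⟪a, b⟫ = ⟪x, c⟫ = 0` shortens to `a — (x ± b) — c`. -/
theorem RootConnected.eq_or_exists_inner_ne_zero {a b : V} (h : RootConnected ip S a b) :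
    a = b ∨ ∃ x ∈ S, ⟪a, x⟫ ≠ 0 ∧ ⟪x, b⟫ ≠ 0 := by
  obtain ⟨-, -, h⟩ := h
  induction h with
  | refl => exact .inl rfl
  | @tail b c _ hbc ih =>
    obtain ⟨hb, hc, hbc⟩ := hbc
    right
    rcases ih with rfl | ⟨x, hx, hax, hxb⟩
    · exact ⟨c, hc, hbc, (hΔ.inner_self_pos (hS.subset hc)).ne'⟩
    rcases ne_or_eq ⟪a, b⟫ 0 with hab | hab
    · exact ⟨b, hb, hab, hbc⟩
    rcases ne_or_eq ⟪x, c⟫ 0 with hxc | hxc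
    · exact ⟨x, hx, hax, hxc⟩
    have hne : x ≠ b := by rintro rfl; exact hax hab
    have hne' : x ≠ -b := by rintro rfl; exact hax (by rw [inner_neg_right, hab, neg_zero])
    rcases hS.add_mem_or_sub_mem hΔ hx hb hxb hne hne' with hw | hw
    · exact ⟨x + b, hw, by simpa [inner_add_right, hab], by simpa [inner_add_left, hxc]⟩
    · exact ⟨x - b, hw, by simpa [inner_sub_right, hab], by simpa [inner_sub_left, hxc]⟩

theorem IsClosedSubsystem.stronglyOrthogonal_of_not_rootConnected {β γ : V} (hβ : β ∈ S)
    (hγ : γ ∈ S) (hnc : ¬ RootConnected ip S β γ) : StronglyOrthogonal Δ β γ := by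
  have horth : ⟪β, γ⟫ = 0 := by
    by_contra h
    exact hnc (.of_inner_ne_zero hβ hγ h)
  refine hΔ.stronglyOrthogonal_of_inner_eq_zero (hS.subset hγ) horth fun hsum => hnc ?_
  have hsumS := hS.add_mem β hβ γ hγ hsum
  refine (RootConnected.of_inner_ne_zero hβ hsumS ?_).trans (.of_inner_ne_zero hsumS hγ ?_)
  · rw [inner_add_right, horth, add_zero]
    exact (hΔ.inner_self_pos (hS.subset hβ)).ne'
  · rw [inner_add_left, horth, zero_add]
    exact (hΔ.inner_self_pos (hS.subset hγ)).ne'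

theorem IsHighestRootOfComponent.stronglyOrthogonal_of_mem_orthogonalInComponent {b γ : V}
    (hb : IsHighestRootOfComponent ip P S b) (hγ : γ ∈ orthogonalInComponent S b)
    (hγP : γ ∈ P) : StronglyOrthogonal Δ b γ :=
  hΔ.stronglyOrthogonal_of_inner_eq_zero (hS.subset hγ.1)
    (by rw [real_inner_comm]; exact hγ.2.2)
    fun h => hb.2.2 γ hγ.1 hγP hγ.2.1 (hS.add_mem b hb.1 γ hγ.1 h)

variable (hP : ∀ α ∈ Δ, α ∈ P ↔ -α ∉ P)
include hP

theorem IsHighestRootOfComponent.inner_nonneg {θ α : V}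
    (hθ : IsHighestRootOfComponent ip P S θ) (hα : α ∈ S) (hαP : α ∈ P)
    (hc : RootConnected ip S α θ) : 0 ≤ ⟪θ, α⟫ := by
  by_contra! hlt
  rcases hΔ.eq_neg_or_add_mem_of_inner_neg (hS.subset hθ.1) (hS.subset hα) hlt with rfl | h
  · exact (hP _ (hS.subset hθ.1)).mp hθ.2.1 (by simpa using hαP)
  · exact hθ.2.2 α hα hαP hc (hS.add_mem _ hθ.1 α hα h)

theorem IsHighestRootOfComponent.sub_mem {θ x : V} (hθ : IsHighestRootOfComponent ip P S θ)
    (hx : x ∈ S) (hc : RootConnected ip S x θ) (hne : x ≠ θ)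
    (hpos : 0 < ⟪θ, x⟫) : θ - x ∈ S ∧ θ - x ∈ P := by
  have hθΔ := hS.subset hθ.1
  have hdS : θ - x ∈ S := hS.sub_mem hθ.1 hx
    ((hΔ.eq_or_sub_mem_of_inner_pos hθΔ (hS.subset hx) hpos).resolve_left hne.symm)
  refine ⟨hdS, by_contra fun hdP => ?_⟩
  -- otherwise `x - θ` is positive and `θ + (x - θ) = x` lies above `θ`
  have hdP' : x - θ ∈ P := by simpa using not_not.mp (mt (hP _ (hS.subset hdS)).mpr hdP)
  have hdS' : x - θ ∈ S := by simpa using hS.neg_mem _ hdS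
  have hdc : RootConnected ip S (x - θ) θ := by
    rw [sub_eq_add_neg] at hdS' ⊢
    refine hc.add hdS' (by rwa [← sub_eq_add_neg, sub_ne_zero]) (.neg ?_ (hΔ.ne_zero hθΔ) ?_)
    · exact hS.neg_mem θ hθ.1
    · exact ⟨hθ.1, hθ.1, .refl⟩
  exact hθ.2.2 _ hdS' hdP' hdc (by rwa [add_sub_cancel])

theorem IsHighestRootOfComponent.inner_eq_zero {θ θ' : V}
    (hθ : IsHighestRootOfComponent ip P S θ) (hθ' : IsHighestRootOfComponent ip P S θ')
    (hc : RootConnected ip S θ θ') (hne : θ ≠ θ') : ⟪θ, θ'⟫ = 0 := by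
  refine ((hθ.inner_nonneg hΔ hS hP hθ'.1 hθ'.2.1 hc.symm).eq_or_lt.resolve_right
    fun hpos => ?_).symm
  -- `θ - θ'` and `θ' - θ` would both be positive
  obtain ⟨hdS, hdP⟩ := hθ.sub_mem hΔ hS hP hθ'.1 hc.symm hne.symm hpos
  have hdP' := (hθ'.sub_mem hΔ hS hP hθ.1 hc hne (by rwa [real_inner_comm])).2
  exact (hP _ (hS.subset hdS)).mp hdP (by rw [neg_sub]; exact hdP')

theorem IsHighestRootOfComponent.eq_of_rootConnected {θ θ' : V}
    (hθ : IsHighestRootOfComponent ip P S θ) (hθ' : IsHighestRootOfComponent ip P S θ')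
    (hc : RootConnected ip S θ θ') : θ = θ' := by
  by_contra hne
  have horth := hθ.inner_eq_zero hΔ hS hP hθ' hc hne
  obtain ⟨y, hyS, hθy, hyθ'⟩ := (hc.eq_or_exists_inner_ne_zero hΔ hS).resolve_left hne
  obtain ⟨x, hxS, hxP, hθx, hxθ'⟩ : ∃ x ∈ S, x ∈ P ∧ ⟪θ, x⟫ ≠ 0 ∧ ⟪x, θ'⟫ ≠ 0 := by
    by_cases hyP : y ∈ P
    · exact ⟨y, hyS, hyP, hθy, hyθ'⟩
    · refine ⟨-y, hS.neg_mem y hyS, not_not.mp (mt (hP y (hS.subset hyS)).mpr hyP), ?_, ?_⟩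
      · simpa [inner_neg_right] using hθy
      · simpa [inner_neg_left] using hyθ'
  have hxθ : ⟪x, θ⟫ ≠ 0 := by rwa [real_inner_comm]
  have hpos := (hθ.inner_nonneg hΔ hS hP hxS hxP (.of_inner_ne_zero hxS hθ.1 hxθ)).lt_of_ne' hθx
  have hpos' := (hθ'.inner_nonneg hΔ hS hP hxS hxP (.of_inner_ne_zero hxS hθ'.1 hxθ')).lt_of_ne'
    (by rwa [real_inner_comm])
  have hxne : x ≠ θ' := by rintro rfl; exact hθx horth
  obtain ⟨hdS, hdP⟩ := hθ'.sub_mem hΔ hS hP hxS (.of_inner_ne_zero hxS hθ'.1 hxθ') hxne hpos'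
  have hneg : ⟪θ, θ' - x⟫ < 0 := by rw [inner_sub_right, horth]; linarith
  have := hθ.inner_nonneg hΔ hS hP hdS hdP
    (.of_inner_ne_zero hdS hθ.1 (by rw [real_inner_comm]; exact hneg.ne))
  linarith

theorem IsHighestRootOfComponent.stronglyOrthogonal_of_inCascade {β γ : V}
    (hβ : IsHighestRootOfComponent ip P S β) (hγ : InCascade ip P S γ) (hne : β ≠ γ) :
    StronglyOrthogonal Δ β γ := by
  cases hγ with
  | highest _ _ hγ =>
    exact hS.stronglyOrthogonal_of_not_rootConnected hΔ hβ.1 hγ.1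
      fun hc => hne (hβ.eq_of_rootConnected hΔ hS hP hγ hc)
  | step _ b _ hb hγ =>
    obtain ⟨hγT, hγP⟩ := hγ.mem_inter
    by_cases hc : RootConnected ip S β b
    · obtain rfl := hβ.eq_of_rootConnected hΔ hS hP hb hc
      exact hβ.stronglyOrthogonal_of_mem_orthogonalInComponent hΔ hS hγT hγP
    · exact hS.stronglyOrthogonal_of_not_rootConnected hΔ hβ.1 hγT.1
        fun h => hc (h.trans hγT.2.1)

end Subsystem

theorem InCascade.stronglyOrthogonal {Δ P S : Set V} {β γ : V}
    (hΔ : IsCrystallographicRootSet Δ) (hP : ∀ α ∈ Δ, α ∈ P ↔ -α ∉ P)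
    (hS : IsClosedSubsystem Δ S) (hβ : InCascade ip P S β) (hγ : InCascade ip P S γ)
    (hne : β ≠ γ) : StronglyOrthogonal Δ β γ := by
  induction hβ generalizing γ with
  | highest S β hβ => exact hβ.stronglyOrthogonal_of_inCascade hΔ hS hP hγ hne
  | step S a β ha hβ ih =>
    cases hγ with
    | highest _ _ hγ =>
      exact (hγ.stronglyOrthogonal_of_inCascade hΔ hS hP (.step S a β ha hβ) hne.symm).symm
        hΔ.neg_mem
    | step _ b γ hb hγ =>
      by_cases hc : RootConnected ip S a b
      · obtain rfl := ha.eq_of_rootConnected hΔ hS hP hb hc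
        exact ih (isClosedSubsystem_orthogonalInComponent hΔ hS a) hγ hne
      · obtain ⟨hβT, -⟩ := hβ.mem_inter
        obtain ⟨hγT, -⟩ := hγ.mem_inter
        exact hS.stronglyOrthogonal_of_not_rootConnected hΔ hβT.1 hγT.1
          fun h => hc (hβT.2.1.symm.trans (h.trans hγT.2.1))

end

open scoped RealInnerProductSpace in
theorem cascade_strongly_orthogonal_general {V : Type*} [NormedAddCommGroup V]
    [InnerProductSpace ℝ V] (Δ P : Set V)
    (h0 : (0 : V) ∉ Δ)
    (hneg : ∀ α ∈ Δ, -α ∈ Δ)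
    (hrefl : ∀ α ∈ Δ, ∀ β ∈ Δ, β - (2 * ⟪β, α⟫ / ⟪α, α⟫) • α ∈ Δ)
    (hcrys : ∀ α ∈ Δ, ∀ β ∈ Δ, ∃ m : ℤ, 2 * ⟪β, α⟫ / ⟪α, α⟫ = (m : ℝ))
    (hPpart : ∀ α ∈ Δ, (α ∈ P ↔ -α ∉ P))
    (β γ : V)
    (hβ : InCascade (fun x y => ⟪x, y⟫) P Δ β)
    (hγ : InCascade (fun x y => ⟪x, y⟫) P Δ γ)
    (hne : β ≠ γ) :
    β + γ ∉ Δ ∧ β - γ ∉ Δ :=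
  hβ.stronglyOrthogonal ⟨h0, hneg, hrefl, hcrys⟩ hPpart ⟨subset_rfl, hneg, fun _ _ _ _ h => h⟩
    hγ hne

open scoped RealInnerProductSpace in
/-- In an irreducible root system `Δ`, the roots of the Kostant cascade are pairwise
strongly orthogonal: for distinct cascade roots `β, γ`, neither `β + γ` nor `β - γ`
is a root. -/
theorem cascade_strongly_orthogonal {V : Type*} [NormedAddCommGroup V]
    [InnerProductSpace ℝ V] (Δ P : Set V)
    (hfin : Δ.Finite) (h0 : (0 : V) ∉ Δ)
    (hneg : ∀ α ∈ Δ, -α ∈ Δ)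
    (hrefl : ∀ α ∈ Δ, ∀ β ∈ Δ, β - (2 * ⟪β, α⟫ / ⟪α, α⟫) • α ∈ Δ)
    (hcrys : ∀ α ∈ Δ, ∀ β ∈ Δ, ∃ m : ℤ, 2 * ⟪β, α⟫ / ⟪α, α⟫ = (m : ℝ))
    (hirr : ∀ α ∈ Δ, ∀ β ∈ Δ, RootConnected (fun x y => ⟪x, y⟫) Δ α β)
    (hPsub : P ⊆ Δ)
    (hPpart : ∀ α ∈ Δ, (α ∈ P ↔ -α ∉ P))
    (hPadd : ∀ α ∈ P, ∀ β ∈ P, α + β ∈ Δ → α + β ∈ P)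
    (β γ : V)
    (hβ : InCascade (fun x y => ⟪x, y⟫) P Δ β)
    (hγ : InCascade (fun x y => ⟪x, y⟫) P Δ γ)
    (hne : β ≠ γ) :
    β + γ ∉ Δ ∧ β - γ ∉ Δ :=
  cascade_strongly_orthogonal_general Δ P h0 hneg hrefl hcrys hPpart β γ hβ hγ hne
end
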